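/- Under the hypotheses of the previous statement, suppose additionally that the prior p satisfies c₂ ≤ p(θ) ≤ c₁ on Θ with 0 < c₂ ≤ c₁, and define the posterior p_N(θ) = e^{N φ_N(θ)} p(θ) / ∫_Θ e^{N φ_N(θ')} p(θ') dθ'. Let κ(β) = Leb(U_{β/2}) > 0. Then for all sufficiently large N, sup_{θ ∈ V_ε} p_N(θ) ≤ κ(β)^{-1} (c₁/c₂)² e^{−N(α−β)} · (c₂/c₁) ≤ κ(β)^{-1} (c₁/c₂)² e^{−N(α−β)}. -/

import Mathlib

open Filter MeasureTheory

/-!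
On the region `U` where `ψ` is within `β / 2` of `ψ θ*`, and for `N` so large that `φ N` is
uniformly `δ`-close to `ψ`, the weight `exp (N φ_N) p` is at least `c₂ exp (N (ψ θ* - β / 2 - δ))`,
so the normalising integral is at least that much times `κ = Leb U`. On `V_ε` the weight is at most
`c₁ exp (N (ψ θ* - ε + δ))`. With `2 δ = ε - α + β / 2` the quotient of the two exponentials is
exactly `exp (-N (α - β))`.
-/

theorem ContinuousOn.measurableSet_sep_mem {α β : Type*} [TopologicalSpace α] [MeasurableSpace α]
    [OpensMeasurableSpace α] [TopologicalSpace β] {f : α → β} {s : Set α} {t : Set β}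
    (hf : ContinuousOn f s) (hs : MeasurableSet s) (ht : IsOpen t) :
    MeasurableSet {x ∈ s | f x ∈ t} := by
  obtain ⟨u, hu, hfu⟩ := continuousOn_iff'.1 hf t ht
  have hsep : {x ∈ s | f x ∈ t} = u ∩ s := by
    rw [← hfu, Set.inter_comm]
    rfl
  exact hsep ▸ hu.measurableSet.inter hs

/-- No integrability is assumed: when `f` is not integrable on `s`, the left side is
`f x / 0 = 0`. -/
theorem div_setIntegral_le_of_le_of_le {α : Type*} [MeasurableSpace α] {μ : Measure α}
    {f : α → ℝ} {s t : Set α} {x : α} {B L : ℝ} (hs : MeasurableSet s) (ht : MeasurableSet t)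
    (hts : t ⊆ s) (hf : ∀ y ∈ s, 0 ≤ f y) (hx : x ∈ s) (hfx : f x ≤ B)
    (hL : ∀ y ∈ t, L ≤ f y) (hL₀ : 0 < L) (hμt : 0 < μ.real t) :
    f x / ∫ y in s, f y ∂μ ≤ B / (L * μ.real t) := by
  have hB : 0 ≤ B := (hf x hx).trans hfx
  by_cases hfi : IntegrableOn f s μ
  · have hμt_ne_top : μ t ≠ ⊤ := (ENNReal.toReal_pos_iff.1 hμt).2.ne
    have hden : L * μ.real t ≤ ∫ y in s, f y ∂μ :=
      calc L * μ.real t ≤ ∫ y in t, f y ∂μ :=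
            setIntegral_ge_of_const_le_real ht hμt_ne_top hL (hfi.mono_set hts)
        _ ≤ ∫ y in s, f y ∂μ :=
            setIntegral_mono_set hfi (ae_restrict_of_forall_mem hs hf) hts.eventuallyLE
    exact div_le_div₀ hB hfx (by positivity) hden
  · rw [integral_undef hfi, div_zero]
    positivity

section ExpWeight

variable {n a b m δ q c : ℝ}

theorem exp_mul_mul_le_of_abs_sub_le (hn : 0 ≤ n) (hab : |a - b| ≤ δ) (hbm : b ≤ m)
    (hq : 0 ≤ q) (hqc : q ≤ c) : Real.exp (n * a) * q ≤ c * Real.exp (n * (m + δ)) := by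
  have ham : a ≤ m + δ := by linarith [(abs_le.1 hab).2]
  rw [mul_comm c]
  gcongr

theorem mul_exp_le_exp_mul_mul_of_abs_sub_le (hn : 0 ≤ n) (hab : |a - b| ≤ δ) (hmb : m ≤ b)
    (hc : 0 ≤ c) (hcq : c ≤ q) : c * Real.exp (n * (m - δ)) ≤ Real.exp (n * a) * q := by
  have hma : m - δ ≤ a := by linarith [(abs_le.1 hab).1]
  rw [mul_comm c]
  gcongr

end ExpWeight

theorem stmt8_general {d : ℕ} (Θ : Set (Fin d → ℝ)) (hΘm : MeasurableSet Θ)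
    (φ : ℕ → (Fin d → ℝ) → ℝ) (ψ : (Fin d → ℝ) → ℝ) (hψ : ContinuousOn ψ Θ)
    (hconv : ∀ ε' > (0 : ℝ), ∀ᶠ N in atTop, ∀ θ ∈ Θ, |φ N θ - ψ θ| ≤ ε')
    (θstar : Fin d → ℝ)
    (ε α β : ℝ) (hβ : 0 < β) (hαε : α < ε)
    (p : (Fin d → ℝ) → ℝ) (c₁ c₂ : ℝ) (hc₂ : 0 < c₂) (hc : c₂ ≤ c₁)
    (hprior : ∀ θ ∈ Θ, c₂ ≤ p θ ∧ p θ ≤ c₁)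
    (pN : ℕ → (Fin d → ℝ) → ℝ)
    (hpN : ∀ (N : ℕ) (θ : Fin d → ℝ), pN N θ =
      Real.exp ((N : ℝ) * φ N θ) * p θ /
        ∫ θ' in Θ, Real.exp ((N : ℝ) * φ N θ') * p θ')
    (κ : ℝ) (hκ : κ = (volume {θ ∈ Θ | ψ θstar - ψ θ < β / 2}).toReal) (hκpos : 0 < κ) :
    ∀ᶠ N in atTop, ∀ θ ∈ {θ ∈ Θ | ε ≤ ψ θstar - ψ θ},
      pN N θ ≤ κ⁻¹ * (c₁ / c₂) ^ 2 * Real.exp (-(N : ℝ) * (α - β)) * (c₂ / c₁) ∧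
      κ⁻¹ * (c₁ / c₂) ^ 2 * Real.exp (-(N : ℝ) * (α - β)) * (c₂ / c₁) ≤
        κ⁻¹ * (c₁ / c₂) ^ 2 * Real.exp (-(N : ℝ) * (α - β)) := by
  set δ := (ε - α + β / 2) / 2 with hδ_def
  have hδ : 0 < δ := by linarith
  have hc₁ : 0 < c₁ := hc₂.trans_le hc
  have hU : MeasurableSet {θ ∈ Θ | ψ θstar - ψ θ < β / 2} := by
    convert hψ.measurableSet_sep_mem hΘm (isOpen_Ioi (a := ψ θstar - β / 2)) using 4
    exact sub_lt_comm
  filter_upwards [hconv δ hδ] with N hN θ ⟨hθ, hθε⟩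
  have hprior₀ : ∀ θ ∈ Θ, 0 ≤ p θ := fun θ hθ => hc₂.le.trans (hprior θ hθ).1
  have hpost : pN N θ ≤ c₁ * Real.exp (N * (ψ θstar - ε + δ)) /
      (c₂ * Real.exp (N * (ψ θstar - β / 2 - δ)) * κ) := by
    rw [hpN, hκ]
    refine div_setIntegral_le_of_le_of_le (f := fun θ' => Real.exp (N * φ N θ') * p θ') hΘm hU
      (Set.sep_subset _ _)
      (fun θ' hθ' => mul_nonneg (Real.exp_pos _).le (hprior₀ θ' hθ')) hθ
      (exp_mul_mul_le_of_abs_sub_le N.cast_nonneg (hN θ hθ) (by linarith) (hprior₀ θ hθ)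
        (hprior θ hθ).2)
      (fun θ' hθ' => mul_exp_le_exp_mul_mul_of_abs_sub_le N.cast_nonneg (hN θ' hθ'.1)
        (by linarith [hθ'.2]) hc₂.le (hprior θ' hθ'.1).1)
      (by positivity) (by rwa [measureReal_def, ← hκ])
  have hexp : Real.exp (N * (ψ θstar - ε + δ)) =
      Real.exp (-(N : ℝ) * (α - β)) * Real.exp (N * (ψ θstar - β / 2 - δ)) := by
    rw [← Real.exp_add, hδ_def]
    ring_nf
  refine ⟨hpost.trans_eq ?_, mul_le_of_le_one_right (by positivity) (div_le_one_of_le₀ hc hc₁.le)⟩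
  rw [hexp]
  field_simp

/-- Lemma 3.2: exponential decay of the posterior density away from the
maximizer set. -/
theorem stmt8 {d : ℕ} (Θ : Set (Fin d → ℝ)) (hΘ : IsCompact Θ) (hΘm : MeasurableSet Θ)
    (φ : ℕ → (Fin d → ℝ) → ℝ) (ψ : (Fin d → ℝ) → ℝ) (hψ : ContinuousOn ψ Θ)
    (hconv : ∀ ε' > (0 : ℝ), ∀ᶠ N in atTop, ∀ θ ∈ Θ, |φ N θ - ψ θ| ≤ ε')
    (θstar : Fin d → ℝ) (hθΘ : θstar ∈ Θ) (hmax : ∀ θ ∈ Θ, ψ θ ≤ ψ θstar)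
    (ε α β : ℝ) (hβ : 0 < β) (hβα : β < α) (hαε : α < ε)
    (p : (Fin d → ℝ) → ℝ) (c₁ c₂ : ℝ) (hc₂ : 0 < c₂) (hc : c₂ ≤ c₁)
    (hprior : ∀ θ ∈ Θ, c₂ ≤ p θ ∧ p θ ≤ c₁)
    (pN : ℕ → (Fin d → ℝ) → ℝ)
    (hpN : ∀ (N : ℕ) (θ : Fin d → ℝ), pN N θ =
      Real.exp ((N : ℝ) * φ N θ) * p θ /
        ∫ θ' in Θ, Real.exp ((N : ℝ) * φ N θ') * p θ')
    (hden : ∀ N : ℕ, 0 < ∫ θ' in Θ, Real.exp ((N : ℝ) * φ N θ') * p θ')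
    (κ : ℝ) (hκ : κ = (volume {θ ∈ Θ | ψ θstar - ψ θ < β / 2}).toReal) (hκpos : 0 < κ) :
    ∀ᶠ N in atTop, ∀ θ ∈ {θ ∈ Θ | ε ≤ ψ θstar - ψ θ},
      pN N θ ≤ κ⁻¹ * (c₁ / c₂) ^ 2 * Real.exp (-(N : ℝ) * (α - β)) * (c₂ / c₁) ∧
      κ⁻¹ * (c₁ / c₂) ^ 2 * Real.exp (-(N : ℝ) * (α - β)) * (c₂ / c₁) ≤
        κ⁻¹ * (c₁ / c₂) ^ 2 * Real.exp (-(N : ℝ) * (α - β)) :=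
  stmt8_general Θ hΘm φ ψ hψ hconv θstar ε α β hβ hαε p c₁ c₂ hc₂ hc hprior pN hpN κ hκ hκpos
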